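/- Let A be an operator system and K a metric set of A. If S ⊆ A is norm bounded and for every ε > 0 there exists λ > 0 such that S ⊆ A_ε + λK + ℂ1, where A_ε = {a ∈ A : ‖a‖ ≤ ε}, then S is norm relatively compact in A. -/
import Mathlib


open scoped ComplexOrder

noncomputable section

variable {B : Type*} [NormedRing B] [StarRing B] [CStarRing B] [NormedAlgebra ℂ B]
  [StarModule ℂ B] [CompleteSpace B]

variable {A : Submodule ℂ B}

/-- A state on the operator system `A`: a unital positive linear functional. -/
def IsState (h1 : (1 : B) ∈ A) (φ : ↥A →ₗ[ℂ] ℂ) : Prop :=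
  φ ⟨1, h1⟩ = 1 ∧ ∀ a : ↥A, (∃ b : B, (a : B) = star b * b) → 0 ≤ φ a

/-- The star operation on `A` (given that `A` is self-adjoint). -/
def starA (hstar : ∀ a ∈ A, star a ∈ A) (a : ↥A) : ↥A := ⟨star (a : B), hstar _ a.2⟩

/-- A metric set of the operator system `A`: a norm compact, self-adjoint, balanced, convex
subset of `A` which separates the states of `A`. -/
structure IsMetricSet (h1 : (1 : B) ∈ A) (hstar : ∀ a ∈ A, star a ∈ A) (K : Set ↥A) :
    Prop where
  compact : IsCompact K
  star_mem : ∀ a ∈ K, starA hstar a ∈ K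
  balanced : ∀ c : ℂ, ‖c‖ ≤ 1 → ∀ a ∈ K, c • a ∈ K
  convex : ∀ a ∈ K, ∀ b ∈ K, ∀ t : ℝ, 0 ≤ t → t ≤ 1 →
    ((t : ℂ)) • a + (((1 - t : ℝ) : ℂ)) • b ∈ K
  separates : ∀ φ ψ : ↥A →ₗ[ℂ] ℂ, IsState h1 φ → IsState h1 ψ → φ ≠ ψ → ∃ a ∈ K, φ a ≠ ψ a

/-- Condition (1): `S` is norm relatively compact. -/
def SCond1 (S : Set ↥A) : Prop := IsCompact (closure S)

/-- Condition (2): the set of affine functions `{â : a ∈ S}` on the state space is bounded and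
`w*`-equicontinuous (the `w*`-topology being the topology of pointwise convergence). -/
def SCond2 (h1 : (1 : B) ∈ A) (S : Set ↥A) : Prop :=
  (∃ C : ℝ, ∀ a ∈ S, ∀ φ : ↥A →ₗ[ℂ] ℂ, IsState h1 φ → ‖φ a‖ ≤ C)
  ∧ ∀ ε > (0 : ℝ), ∀ φ : ↥A →ₗ[ℂ] ℂ, IsState h1 φ →
      ∃ U ∈ nhds (⇑φ : ↥A → ℂ), ∀ ψ : ↥A →ₗ[ℂ] ℂ, IsState h1 ψ → (⇑ψ : ↥A → ℂ) ∈ U →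
        ∀ a ∈ S, ‖φ a - ψ a‖ < ε

/-- Condition (3): `S` is norm bounded and for every `ε > 0` there is `λ > 0` with
`S ⊆ A_ε + λK + ℂ1`. -/
def SCond3 (h1 : (1 : B) ∈ A) (K : Set ↥A) (S : Set ↥A) : Prop :=
  (∃ C : ℝ, ∀ a ∈ S, ‖(a : B)‖ ≤ C)
  ∧ ∀ ε > (0 : ℝ), ∃ lam > (0 : ℝ), ∀ a ∈ S, ∃ (b c : ↥A) (z : ℂ),
      ‖(b : B)‖ ≤ ε ∧ c ∈ K ∧ a = b + ((lam : ℂ)) • c + z • (⟨1, h1⟩ : ↥A)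

/-- If `S` is norm bounded and for every `ε > 0` there is `λ > 0` with `S ⊆ A_ε + λK + ℂ1`,
then `S` is norm relatively compact in `A`. -/
theorem relatively_compact_of_decomposition
    (h1 : (1 : B) ∈ A) (hstar : ∀ a ∈ A, star a ∈ A) (hclosed : IsClosed (A : Set B))
    (K : Set ↥A) (hK : IsMetricSet h1 hstar K) (S : Set ↥A) (hS : SCond3 h1 K S) :
    SCond1 S := by
  classical
  by_cases htriv : Subsingleton B
  · have : Subsingleton ↥A := ⟨fun a b => Subtype.ext (Subsingleton.elim _ _)⟩
    exact (Set.subsingleton_of_subsingleton).isCompact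
  have : Nontrivial B := not_subsingleton_iff_nontrivial.mp htriv
  have hcomplete : CompleteSpace ↥A := hclosed.completeSpace_coe
  -- suffices: S totally bounded
  have hTB : TotallyBounded S := by
    rw [Metric.totallyBounded_iff]
    intro ε hε
    obtain ⟨C, hC⟩ := hS.1
    obtain ⟨lam, hlam, hdec⟩ := hS.2 (ε / 3) (by positivity)
    obtain ⟨M0, hM0⟩ := hK.compact.isBounded.exists_norm_le
    set M : ℝ := max M0 0 with hM
    have hM' : ∀ c ∈ K, ‖c‖ ≤ M := fun c hc => (hM0 c hc).trans (le_max_left _ _)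
    set R : ℝ := C + ε / 3 + lam * M with hR
    have hone : ‖(⟨1, h1⟩ : ↥A)‖ = 1 := by
      show ‖(1 : B)‖ = 1
      exact norm_one
    set T : Set ↥A :=
      (fun p : ↥A × ℂ => (lam : ℂ) • p.1 + p.2 • (⟨1, h1⟩ : ↥A)) ''
        (K ×ˢ Metric.closedBall (0 : ℂ) R) with hT
    have hTc : IsCompact T := by
      refine (hK.compact.prod (isCompact_closedBall 0 R)).image ?_
      fun_prop
    obtain ⟨t, htf, hts⟩ :=
      Metric.totallyBounded_iff.mp hTc.totallyBounded (ε / 3) (by positivity)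
    refine ⟨t, htf, fun a ha => ?_⟩
    obtain ⟨b, c, z, hb, hc, habc⟩ := hdec a ha
    have hanorm : ‖a‖ ≤ C := hC a ha
    have hbnorm : ‖b‖ ≤ ε / 3 := hb
    have hz : ‖z‖ ≤ R := by
      have h1' : z • (⟨1, h1⟩ : ↥A) = a - b - (lam : ℂ) • c := by
        rw [habc]; abel
      have : ‖z‖ = ‖z • (⟨1, h1⟩ : ↥A)‖ := by
        rw [norm_smul, hone, mul_one]
      rw [this, h1']
      calc ‖a - b - (lam : ℂ) • c‖ ≤ ‖a - b‖ + ‖(lam : ℂ) • c‖ := norm_sub_le _ _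
        _ ≤ ‖a‖ + ‖b‖ + ‖(lam : ℂ) • c‖ := by
            gcongr; exact norm_sub_le _ _
        _ ≤ C + ε / 3 + lam * M := by
            have : ‖(lam : ℂ) • c‖ = lam * ‖c‖ := by
              rw [norm_smul, Complex.norm_real, Real.norm_eq_abs, abs_of_pos hlam]
            rw [this]
            gcongr
            exact hM' c hc
    set p : ↥A := (lam : ℂ) • c + z • (⟨1, h1⟩ : ↥A) with hp
    have hpT : p ∈ T := ⟨(c, z), ⟨hc, by simpa [Metric.mem_closedBall, dist_eq_norm] using hz⟩, rfl⟩
    obtain ⟨y, hyt, hyp⟩ := Set.mem_iUnion₂.mp (hts hpT)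
    refine Set.mem_iUnion₂.mpr ⟨y, hyt, ?_⟩
    have hap : dist a p ≤ ε / 3 := by
      rw [dist_eq_norm]
      have : a - p = b := by rw [habc, hp]; abel
      rw [this]; exact hbnorm
    have : dist a y ≤ dist a p + dist p y := dist_triangle _ _ _
    have hy : dist p y < ε / 3 := Metric.mem_ball.mp hyp
    rw [Metric.mem_ball]
    linarith
  exact TotallyBounded.isCompact_of_isClosed hTB.closure isClosed_closure
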